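/- arXiv:2008.00043 — 2 statements merged into one kernel-verified Lean document; each statement's English description precedes it below -/
import Mathlib

section
/- Fix m, n ≥ 1. Let O ⊆ [m] with #O odd and U ⊆ N with #U odd, and let Ev(O,U) = {S ⊆ [m+n] : S ≠ ∅, #(S ∩ O) is even, and #(S ∩ U) is even}. Then: (a) Ev(O,U) ⊆ D̄_{m,n}; (b) for every T ⊆ [m+n] with T ∉ {∅, O, U, O ∪ U}, the number of S ∈ Ev(O,U) with #(S ∩ T) odd equals 2^(m+n−3); and (c) for T ∈ {∅, O, U, O ∪ U}, the number of S ∈ Ev(O,U) with #(S ∩ T) odd is 0. In particular, Σ_{S ∈ Ev(O,U)} x_S ≤ 2^(m+n−3) is valid on GCut(D_{m,n}), with equality at the vertex d^T exactly when T ∉ {∅, O, U, O ∪ U}. -/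
/-!
For `O`, `U` disjoint and nonempty, the parities `S ↦ (#(S ∩ O), #(S ∩ U), #(S ∩ T)) mod 2` form
an additive map from `(Finset V, ∆)` to `(ZMod 2)³`. Its range contains `(1, 0, *)` and
`(0, 1, *)` (singletons of `O` and `U`), and it contains `(0, 0, 1)` unless membership in `T` is
constant on `O`, on `U` and on the rest, i.e. unless `T ∈ {∅, O, U, O ∪ U}`. Then the map is onto,
so each of its eight fibres has `2 ^ (m + n) / 8` elements. For `T ∈ {∅, O, U, O ∪ U}` the parity
of `#(S ∩ T)` is the sum of the other two, so it vanishes on `Ev(O, U)`. A set meeting the odd set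
`O ⊆ [m]` evenly misses a point of it, and likewise for `U ⊆ N`, which is `Ev(O, U) ⊆ D̄_{m,n}`;
the inequality on `GCut(D_{m,n})` holds because it holds at every vertex `d^T`.
-/

open Finset

/-- Membership in `D̄_{m,n}`: a nonempty subset `S` of `[m+n]` whose intersection with the
first block `[m]` is a proper subset of `[m]` and whose intersection with the second block
`N = {m+1,…,m+n}` is a proper subset of `N`. -/
def DFace (m n : ℕ) (S : Finset (Fin (m + n))) : Prop :=
  S.Nonempty ∧ (∃ i : Fin (m + n), i.val < m ∧ i ∉ S) ∧
    (∃ j : Fin (m + n), m ≤ j.val ∧ j ∉ S)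

instance (m n : ℕ) : DecidablePred (DFace m n) := fun S => by
  unfold DFace; infer_instance

/-- The index type of the nonempty faces of `D_{m,n}`. -/
abbrev DIdx (m n : ℕ) : Type := {S : Finset (Fin (m + n)) // DFace m n S}

/-- The vertex `d^T` of `GCut(D_{m,n})`. -/
noncomputable def dvecD (m n : ℕ) (T : Finset (Fin (m + n))) : DIdx m n → ℝ :=
  fun S => if Odd ((S.val ∩ T).card) then 1 else 0

theorem Finset.card_symmDiff_add_two_mul_card_inter {α : Type*} [DecidableEq α] (s t : Finset α) :
    #(symmDiff s t) + 2 * #(s ∩ t) = #s + #t := by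
  have hs := card_sdiff_add_card_inter s t
  have ht := card_sdiff_add_card_inter t s
  rw [inter_comm] at ht
  rw [symmDiff_def, sup_eq_union, card_union_of_disjoint disjoint_sdiff_sdiff]
  omega

theorem Finset.exists_mem_notMem_of_even_card_inter {α : Type*} [DecidableEq α] {s t : Finset α}
    (hs : Odd #s) (ht : Even #(t ∩ s)) : ∃ a ∈ s, a ∉ t := by
  by_contra! h
  rw [inter_eq_right.2 h] at ht
  exact Nat.not_even_iff_odd.2 hs ht

theorem Finset.inter_eq_empty_or_eq_of_forall_mem {α : Type*} [DecidableEq α] {s t : Finset α}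
    (h : ∀ a ∈ s, ∀ b ∈ s, a ∈ t → b ∈ t) : t ∩ s = ∅ ∨ t ∩ s = s := by
  rcases (t ∩ s).eq_empty_or_nonempty with hts | ⟨a, ha⟩
  · exact Or.inl hts
  · rw [mem_inter] at ha
    exact Or.inr (inter_eq_right.2 fun b hb => h a ha.2 b hb ha.1)

theorem AddMonoidHom.card_fiber_mul_card_of_surjective {G H : Type*} [AddGroup G] [Fintype G]
    [AddGroup H] [Fintype H] [DecidableEq H] (f : G →+ H) (hf : Function.Surjective f) (y : H) :
    #{g | f g = y} * Fintype.card H = Fintype.card G := by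
  rw [← card_univ (α := G), card_eq_sum_card_fiberwise (f := f) (s := univ) (t := univ)
    (fun _ _ => mem_univ _), sum_congr rfl fun z _ => card_fiber_eq_of_mem_range f (hf z) (hf y),
    sum_const, smul_eq_mul, card_univ, mul_comm]

theorem AddSubgroup.eq_top_of_mem_zmod_two_triangular (K : AddSubgroup (ZMod 2 × ZMod 2 × ZMod 2))
    {a b : ZMod 2} (h₁ : (1, 0, a) ∈ K) (h₂ : (0, 1, b) ∈ K) (h₃ : (0, 0, 1) ∈ K) : K = ⊤ := by
  refine eq_top_iff.2 fun ⟨p, q, r⟩ _ => ?_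
  have hpqr : ((p, q, r) : ZMod 2 × ZMod 2 × ZMod 2) =
      p.val • (1, 0, a) + q.val • (0, 1, b) + (r - p * a - q * b).val • (0, 0, 1) := by
    ext <;> simp [nsmul_eq_mul]
  rw [hpqr]
  exact add_mem (add_mem (nsmul_mem h₁ _) (nsmul_mem h₂ _)) (nsmul_mem h₃ _)

section Parity

-- Makes `Finset V` an additive group whose addition is symmetric difference.
open scoped BooleanRingOfBooleanAlgebra

variable {V : Type*} [DecidableEq V]

def Finset.parityOn (A : Finset V) : Finset V →+ ZMod 2 where
  toFun S := #(S ∩ A)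
  map_zero' := by simp [show (0 : Finset V) = ∅ from rfl]
  map_add' S W := by
    have h := congrArg (Nat.cast : ℕ → ZMod 2)
      (card_symmDiff_add_two_mul_card_inter (S ∩ A) (W ∩ A))
    push_cast [show (2 : ZMod 2) = 0 from rfl] at h
    rw [zero_mul, add_zero] at h
    exact (congrArg (fun X => ((#X : ℕ) : ZMod 2)) (inf_symmDiff_distrib_right S W A)).trans h

theorem Finset.parityOn_apply (A S : Finset V) : parityOn A S = #(S ∩ A) := rfl

theorem Finset.parityOn_singleton (A : Finset V) (v : V) :
    parityOn A {v} = if v ∈ A then 1 else 0 := by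
  by_cases hv : v ∈ A <;> simp [parityOn_apply, hv]

def Finset.parityTriple (O U T : Finset V) : Finset V →+ ZMod 2 × ZMod 2 × ZMod 2 :=
  (parityOn O).prod ((parityOn U).prod (parityOn T))

theorem Finset.parityTriple_apply (O U T S : Finset V) :
    parityTriple O U T S = (parityOn O S, parityOn U S, parityOn T S) := rfl

theorem Finset.exists_parityTriple_eq_zero_zero_one {O U T : Finset V} (hOU : Disjoint O U)
    (hT : ¬(T = ∅ ∨ T = O ∨ T = U ∨ T = O ∪ U)) : ∃ S, parityTriple O U T S = (0, 0, 1) := by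
  by_contra! h
  apply hT
  have hsub : T ⊆ O ∪ U := fun v hv => by
    by_contra hv'
    rw [mem_union, not_or] at hv'
    exact h {v} (by simp [parityTriple_apply, parityOn_singleton, hv, hv'.1, hv'.2])
  -- membership in `T` is constant on `O` and on `U`, since otherwise `{a} ∆ {b}` would be a witness
  have hclass : ∀ a b, a ∈ T → b ∉ T → (a ∈ O ↔ b ∈ O) → (a ∈ U ↔ b ∈ U) → False :=
    fun a b ha hb hO hU => h ({a} + {b}) (by
      rw [map_add]
      by_cases haO : a ∈ O <;> by_cases haU : a ∈ U <;>
        simp [parityTriple_apply, parityOn_singleton, ha, hb, ← hO, ← hU, haO, haU] <;> decide)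
  have hTO := inter_eq_empty_or_eq_of_forall_mem (s := O) (t := T) fun a ha b hb haT => by
    by_contra hbT
    exact hclass a b haT hbT (iff_of_true ha hb)
      (iff_of_false (disjoint_left.1 hOU ha) (disjoint_left.1 hOU hb))
  have hTU := inter_eq_empty_or_eq_of_forall_mem (s := U) (t := T) fun a ha b hb haT => by
    by_contra hbT
    exact hclass a b haT hbT (iff_of_false (disjoint_right.1 hOU ha) (disjoint_right.1 hOU hb))
      (iff_of_true ha hb)
  rw [← inter_eq_left.2 hsub, inter_union_distrib_left]
  rcases hTO with hTO | hTO <;> rcases hTU with hTU | hTU <;> simp [hTO, hTU]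

theorem Finset.parityTriple_surjective {O U T : Finset V} (hOU : Disjoint O U) (hO : O.Nonempty)
    (hU : U.Nonempty) (hT : ¬(T = ∅ ∨ T = O ∨ T = U ∨ T = O ∪ U)) :
    Function.Surjective (parityTriple O U T) := by
  obtain ⟨o, ho⟩ := hO
  obtain ⟨u, hu⟩ := hU
  obtain ⟨S, hS⟩ := exists_parityTriple_eq_zero_zero_one hOU hT
  rw [← AddMonoidHom.range_eq_top]
  refine AddSubgroup.eq_top_of_mem_zmod_two_triangular _ (a := parityOn T {o})
    (b := parityOn T {u}) ⟨{o}, ?_⟩ ⟨{u}, ?_⟩ ⟨S, hS⟩ <;>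
    simp [parityTriple_apply, parityOn_singleton, ho, hu, disjoint_left.1 hOU ho,
      disjoint_right.1 hOU hu]

theorem Finset.card_filter_parityTriple_eq [Fintype V] {O U T : Finset V}
    (hsurj : Function.Surjective (parityTriple O U T)) (y : ZMod 2 × ZMod 2 × ZMod 2) :
    #{S | parityTriple O U T S = y} = 2 ^ (Fintype.card V - 3) := by
  have h := (parityTriple O U T).card_fiber_mul_card_of_surjective hsurj y
  rw [Fintype.card_finset, show Fintype.card (ZMod 2 × ZMod 2 × ZMod 2) = 2 ^ 3 from rfl] at h
  have h3 : 3 ≤ Fintype.card V := (Nat.pow_dvd_pow_iff_le_right one_lt_two).1 (Dvd.intro_left _ h)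
  rw [← Nat.sub_add_cancel h3, pow_add] at h
  exact Nat.eq_of_mul_eq_mul_right (by norm_num) h

end Parity

theorem Finset.card_filter_even_even_odd {V : Type*} [Fintype V] [DecidableEq V]
    {O U T : Finset V} (hOU : Disjoint O U) (hO : O.Nonempty) (hU : U.Nonempty)
    (hT : ¬(T = ∅ ∨ T = O ∨ T = U ∨ T = O ∪ U)) :
    #{S : Finset V | Even #(S ∩ O) ∧ Even #(S ∩ U) ∧ Odd #(S ∩ T)} = 2 ^ (Fintype.card V - 3) := by
  rw [← card_filter_parityTriple_eq (parityTriple_surjective hOU hO hU hT) (0, 0, 1)]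
  simp [parityTriple_apply, parityOn_apply, ZMod.natCast_eq_zero_iff_even,
    ZMod.natCast_eq_one_iff_odd]

theorem Finset.card_filter_even_even_odd_eq_zero {V : Type*} [Fintype V] [DecidableEq V]
    {O U T : Finset V} (hOU : Disjoint O U) (hT : T = ∅ ∨ T = O ∨ T = U ∨ T = O ∪ U) :
    #{S : Finset V | Even #(S ∩ O) ∧ Even #(S ∩ U) ∧ Odd #(S ∩ T)} = 0 := by
  refine card_eq_zero.2 (filter_eq_empty_iff.2 fun S _ ⟨hSO, hSU, hST⟩ => ?_)
  rw [← Nat.not_even_iff_odd] at hST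
  rcases hT with rfl | rfl | rfl | rfl
  · simp at hST
  · exact hST hSO
  · exact hST hSU
  · rw [inter_union_distrib_left, card_union_of_disjoint
      (hOU.mono inter_subset_right inter_subset_right)] at hST
    exact hST (hSO.add hSU)

theorem sum_ite_le_of_mem_convexHull {ι : Type*} [Fintype ι] (p : ι → Prop) [DecidablePred p]
    {s : Set (ι → ℝ)} {c : ℝ} (hs : ∀ x ∈ s, ∑ i, (if p i then x i else 0) ≤ c)
    {x : ι → ℝ} (hx : x ∈ convexHull ℝ s) : ∑ i, (if p i then x i else 0) ≤ c := by
  have hlin : IsLinearMap ℝ fun x : ι → ℝ => ∑ i, (if p i then x i else 0) :=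
    ⟨fun x y => by
      rw [← sum_add_distrib]
      exact sum_congr rfl fun i _ => by simp only [Pi.add_apply, ite_add_ite, add_zero],
     fun a x => by simp only [mul_sum, Pi.smul_apply, smul_eq_mul, mul_ite, mul_zero]⟩
  exact convexHull_min hs (convex_halfSpace_le hlin c) hx

section DFace

variable {m n : ℕ} {O U : Finset (Fin (m + n))}

theorem dFace_of_even_card_inter (hO : ∀ i ∈ O, i.val < m) (hOodd : Odd #O)
    (hU : ∀ j ∈ U, m ≤ j.val) (hUodd : Odd #U) {S : Finset (Fin (m + n))} (hS : S.Nonempty)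
    (hSO : Even #(S ∩ O)) (hSU : Even #(S ∩ U)) : DFace m n S := by
  obtain ⟨i, hiO, hiS⟩ := exists_mem_notMem_of_even_card_inter hOodd hSO
  obtain ⟨j, hjU, hjS⟩ := exists_mem_notMem_of_even_card_inter hUodd hSU
  exact ⟨hS, ⟨i, hO i hiO, hiS⟩, ⟨j, hU j hjU, hjS⟩⟩

theorem sum_ite_dvecD_eq_card (hO : ∀ i ∈ O, i.val < m) (hOodd : Odd #O)
    (hU : ∀ j ∈ U, m ≤ j.val) (hUodd : Odd #U) (T : Finset (Fin (m + n))) :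
    ∑ S : DIdx m n, (if Even #(S.val ∩ O) ∧ Even #(S.val ∩ U) then dvecD m n T S else 0) =
      #{S : Finset (Fin (m + n)) | Even #(S ∩ O) ∧ Even #(S ∩ U) ∧ Odd #(S ∩ T)} := by
  set P := fun S : Finset (Fin (m + n)) => Even #(S ∩ O) ∧ Even #(S ∩ U) ∧ Odd #(S ∩ T)
  have hsummand (S : DIdx m n) : (if Even #(S.val ∩ O) ∧ Even #(S.val ∩ U) then dvecD m n T S
      else 0) = if P S.val then (1 : ℝ) else 0 := by
    by_cases h : Even #(S.val ∩ O) ∧ Even #(S.val ∩ U)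
    · simp [dvecD, P, h]
    · simp only [P, ← and_assoc, if_neg h, if_neg (mt And.left h)]
  have hface (S : Finset (Fin (m + n))) (hS : (if P S then (1 : ℝ) else 0) ≠ 0) : DFace m n S := by
    obtain ⟨hSO, hSU, hST⟩ : P S := by simpa using hS
    exact dFace_of_even_card_inter hO hOodd hU hUodd
      ((card_pos.1 hST.pos).mono inter_subset_left) hSO hSU
  rw [sum_congr rfl fun S _ => hsummand S,
    ← sum_subtype (univ.filter (DFace m n)) (by simp) fun S => if P S then (1 : ℝ) else 0,
    sum_filter_of_ne fun S _ => hface S, sum_boole]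

end DFace

theorem stmt_14_general (m n : ℕ)
    (O U : Finset (Fin (m + n)))
    (hO : ∀ i ∈ O, i.val < m) (hOodd : Odd O.card)
    (hU : ∀ j ∈ U, m ≤ j.val) (hUodd : Odd U.card) :
    (∀ S : Finset (Fin (m + n)), S.Nonempty → Even ((S ∩ O).card) →
        Even ((S ∩ U).card) → DFace m n S) ∧
    (∀ T : Finset (Fin (m + n)), T ≠ ∅ → T ≠ O → T ≠ U → T ≠ O ∪ U →
      (Finset.univ.filter (fun S : Finset (Fin (m + n)) =>
          S.Nonempty ∧ Even ((S ∩ O).card) ∧ Even ((S ∩ U).card) ∧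
            Odd ((S ∩ T).card))).card = 2 ^ (m + n - 3)) ∧
    (∀ T : Finset (Fin (m + n)), (T = ∅ ∨ T = O ∨ T = U ∨ T = O ∪ U) →
      (Finset.univ.filter (fun S : Finset (Fin (m + n)) =>
          S.Nonempty ∧ Even ((S ∩ O).card) ∧ Even ((S ∩ U).card) ∧
            Odd ((S ∩ T).card))).card = 0) ∧
    (∀ x ∈ convexHull ℝ (Set.range (dvecD m n)),
      ∑ S : DIdx m n,
        (if Even ((S.val ∩ O).card) ∧ Even ((S.val ∩ U).card) then x S else 0) ≤
        2 ^ (m + n - 3)) ∧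
    (∀ T : Finset (Fin (m + n)),
      (∑ S : DIdx m n,
          (if Even ((S.val ∩ O).card) ∧ Even ((S.val ∩ U).card) then dvecD m n T S
            else 0) = 2 ^ (m + n - 3)) ↔
        ¬(T = ∅ ∨ T = O ∨ T = U ∨ T = O ∪ U)) := by
  have hOU : Disjoint O U := disjoint_left.2 fun i hiO hiU => (hU i hiU).not_gt (hO i hiO)
  have hnonempty (T : Finset (Fin (m + n))) :
      #{S : Finset (Fin (m + n)) | S.Nonempty ∧ Even #(S ∩ O) ∧ Even #(S ∩ U) ∧ Odd #(S ∩ T)} =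
        #{S : Finset (Fin (m + n)) | Even #(S ∩ O) ∧ Even #(S ∩ U) ∧ Odd #(S ∩ T)} :=
    congrArg card <| filter_congr fun S _ =>
      and_iff_right_of_imp fun h => (card_pos.1 h.2.2.pos).mono inter_subset_left
  have hgeneric (T) (hT : ¬(T = ∅ ∨ T = O ∨ T = U ∨ T = O ∪ U)) :
      #{S : Finset (Fin (m + n)) | Even #(S ∩ O) ∧ Even #(S ∩ U) ∧ Odd #(S ∩ T)} =
        2 ^ (m + n - 3) := by
    rw [card_filter_even_even_odd hOU (card_pos.1 hOodd.pos) (card_pos.1 hUodd.pos) hT,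
      Fintype.card_fin]
  have hvertex (T) := sum_ite_dvecD_eq_card hO hOodd hU hUodd T
  refine ⟨fun S => dFace_of_even_card_inter hO hOodd hU hUodd,
    fun T h₁ h₂ h₃ h₄ => (hnonempty T).trans (hgeneric T (by tauto)),
    fun T hT => (hnonempty T).trans (card_filter_even_even_odd_eq_zero hOU hT),
    fun x => sum_ite_le_of_mem_convexHull _ ?_, fun T => ?_⟩
  · rintro _ ⟨T, rfl⟩
    rw [hvertex]
    by_cases hT : T = ∅ ∨ T = O ∨ T = U ∨ T = O ∪ U
    · simp [card_filter_even_even_odd_eq_zero hOU hT]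
    · simp [hgeneric T hT]
  · rw [hvertex]
    by_cases hT : T = ∅ ∨ T = O ∨ T = U ∨ T = O ∪ U
    · simpa [card_filter_even_even_odd_eq_zero hOU hT, hT] using
        (pow_pos (two_pos (α := ℝ)) (m + n - 3)).ne
    · simp [hgeneric T hT, hT]

/-- with `O ⊆ [m]`, `U ⊆ N` of odd cardinality and
`Ev(O,U) = {S ≠ ∅ : #(S ∩ O), #(S ∩ U) even}`: (a) `Ev(O,U) ⊆ D̄_{m,n}`;
(b) for `T ∉ {∅, O, U, O ∪ U}` the number of `S ∈ Ev(O,U)` with `#(S ∩ T)` odd is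
`2^(m+n−3)`; (c) for `T ∈ {∅, O, U, O ∪ U}` that number is `0`.  In particular
`Σ_{S ∈ Ev(O,U)} x_S ≤ 2^(m+n−3)` is valid on `GCut(D_{m,n})`, with equality at `d^T`
exactly when `T ∉ {∅, O, U, O ∪ U}`. -/
theorem stmt_14 (m n : ℕ) (hm : 1 ≤ m) (hn : 1 ≤ n)
    (O U : Finset (Fin (m + n)))
    (hO : ∀ i ∈ O, i.val < m) (hOodd : Odd O.card)
    (hU : ∀ j ∈ U, m ≤ j.val) (hUodd : Odd U.card) :
    (∀ S : Finset (Fin (m + n)), S.Nonempty → Even ((S ∩ O).card) →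
        Even ((S ∩ U).card) → DFace m n S) ∧
    (∀ T : Finset (Fin (m + n)), T ≠ ∅ → T ≠ O → T ≠ U → T ≠ O ∪ U →
      (Finset.univ.filter (fun S : Finset (Fin (m + n)) =>
          S.Nonempty ∧ Even ((S ∩ O).card) ∧ Even ((S ∩ U).card) ∧
            Odd ((S ∩ T).card))).card = 2 ^ (m + n - 3)) ∧
    (∀ T : Finset (Fin (m + n)), (T = ∅ ∨ T = O ∨ T = U ∨ T = O ∪ U) →
      (Finset.univ.filter (fun S : Finset (Fin (m + n)) =>
          S.Nonempty ∧ Even ((S ∩ O).card) ∧ Even ((S ∩ U).card) ∧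
            Odd ((S ∩ T).card))).card = 0) ∧
    (∀ x ∈ convexHull ℝ (Set.range (dvecD m n)),
      ∑ S : DIdx m n,
        (if Even ((S.val ∩ O).card) ∧ Even ((S.val ∩ U).card) then x S else 0) ≤
        2 ^ (m + n - 3)) ∧
    (∀ T : Finset (Fin (m + n)),
      (∑ S : DIdx m n,
          (if Even ((S.val ∩ O).card) ∧ Even ((S.val ∩ U).card) then dvecD m n T S
            else 0) = 2 ^ (m + n - 3)) ↔
        ¬(T = ∅ ∨ T = O ∨ T = U ∨ T = O ∪ U)) :=
  stmt_14_general m n O U hO hOodd hU hUodd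
end

section
/- Fix m, n ≥ 2. Let A₁ ≠ A₂ be nonempty subsets of [m] and B₁ ≠ B₂ nonempty subsets of N with #A₁ ≡ #A₂ ≡ #B₁ ≡ #B₂ (mod 2), and let a ∈ ℝ^(D̄_{m,n}) be the associated four-parity functional. Then for every T ⊆ [m+n] with T ∉ {A₁ ∪ B₁, A₁ ∪ B₂, A₂ ∪ B₁, A₂ ∪ B₂}, one has Σ_{S ∈ D̄_{m,n}} a_S · d^T_S = 0; equivalently, among the S ∈ D̄_{m,n} with #(S ∩ T) odd, the number with a_S = 1 equals the number with a_S = −1. -/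
open Finset

/-- The four-parity functional `a` associated to `A₁, A₂, B₁, B₂`. -/
noncomputable def fourParity (m n : ℕ) (A₁ A₂ B₁ B₂ : Finset (Fin (m + n)))
    (S : Finset (Fin (m + n))) : ℝ :=
  if (Odd ((S ∩ A₁).card) ∧ Even ((S ∩ B₁).card) ∧ Even ((S ∩ A₂).card) ∧
        Odd ((S ∩ B₂).card)) ∨
      (Even ((S ∩ A₁).card) ∧ Odd ((S ∩ B₁).card) ∧ Odd ((S ∩ A₂).card) ∧
        Even ((S ∩ B₂).card)) then 1
  else if (Odd ((S ∩ A₁).card) ∧ Odd ((S ∩ B₁).card) ∧ Even ((S ∩ A₂).card) ∧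
        Even ((S ∩ B₂).card)) ∨
      (Even ((S ∩ A₁).card) ∧ Even ((S ∩ B₁).card) ∧ Odd ((S ∩ A₂).card) ∧
        Odd ((S ∩ B₂).card)) then -1
  else 0

/-!
Write `χ_U(S) = (-1)^#(S ∩ U)` for the characters of the Boolean cube. Then
`a_S = -(χ_{A₁} - χ_{A₂})(χ_{B₁} - χ_{B₂}) / 4` and `d^T_S = (1 - χ_T) / 2`, so since
`χ_U χ_V = χ_{U ∆ V}` the sum `Σ a_S d^T_S` is a signed combination of the character sums
`F(U) = Σ_{S ∈ D̄} χ_U(S)` at `U = Aᵢ ∪ Bⱼ` and `U = (Aᵢ ∪ Bⱼ) ∆ T`.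

The non-faces of `D_{m,n}` are `∅`, the supersets of `[m]` and the supersets of `N`, and
summing `χ_U` over the supersets of `P` gives `(-1)^#U 2^{#Pᶜ}` if `U ⊆ P` and `0` otherwise.
So for `U ≠ ∅`, `F(U) = (-1)^#U (1 - [U ⊆ [m]] 2^n - [U ⊆ N] 2^m) - 1`. This vanishes at the
even sets `Aᵢ ∪ Bⱼ`, which meet both blocks. At `V = (Aᵢ ∪ Bⱼ) ∆ T ≠ ∅` we have
`(-1)^#V = (-1)^#T`, while `V ⊆ [m]` iff `Bⱼ = T ∩ N` and `V ⊆ N` iff `Aᵢ = T ∩ [m]`; each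
indicator depends on one index only, so it cancels in the combination, whose signs are
products `εᵢ εⱼ`.
-/

open scoped symmDiff

section Walsh

variable {α : Type*} [DecidableEq α]

def walsh (U S : Finset α) : ℝ := (-1) ^ #(S ∩ U)

lemma walsh_eq_prod (U S : Finset α) : walsh U S = ∏ i ∈ S, if i ∈ U then -1 else 1 := by
  rw [walsh, prod_ite_mem, prod_const]

lemma walsh_mul_walsh (U V S : Finset α) : walsh U S * walsh V S = walsh (U ∆ V) S := by
  simp only [walsh_eq_prod, ← prod_mul_distrib]
  refine prod_congr rfl fun i _ => ?_
  by_cases hU : i ∈ U <;> by_cases hV : i ∈ V <;> simp [hU, hV, mem_symmDiff]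

lemma walsh_of_subset {U S : Finset α} (h : U ⊆ S) : walsh U S = (-1) ^ #U := by
  rw [walsh, inter_eq_right.mpr h]

lemma symmDiff_subset_iff_sdiff_eq_sdiff (X T M : Finset α) : X ∆ T ⊆ M ↔ X \ M = T \ M := by
  simp only [subset_iff, Finset.ext_iff, mem_symmDiff, mem_sdiff]
  refine forall_congr' fun i => ?_
  by_cases hM : i ∈ M <;> by_cases hX : i ∈ X <;> by_cases hT : i ∈ T <;> simp [hM, hX, hT]

variable [Fintype α]

lemma sum_walsh_filter_superset (P U : Finset α) :
    ∑ S with P ⊆ S, walsh U S = if U ⊆ P then (-1) ^ #U * 2 ^ #Pᶜ else 0 := by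
  have expand := prod_add (fun i => if i ∈ U then (-1 : ℝ) else 1)
    (fun i => if i ∉ P then 1 else 0) univ
  simp only [powerset_univ, ← compl_eq_univ_sdiff, prod_boole, ← walsh_eq_prod] at expand
  have hsub : ∀ t : Finset α, (∀ i ∈ tᶜ, i ∉ P) ↔ P ⊆ t := fun t => by
    simp only [mem_compl, subset_iff]; exact forall_congr' fun i => not_imp_not
  simp only [hsub, mul_ite, mul_one, mul_zero, ← sum_filter] at expand
  rw [← expand, ← prod_mul_prod_compl P]
  have hP : ∏ i ∈ P, ((if i ∈ U then (-1 : ℝ) else 1) + if i ∉ P then 1 else 0) =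
      walsh U P := by
    rw [walsh_eq_prod]; exact prod_congr rfl fun i hi => by simp [hi]
  have hPc : ∏ i ∈ Pᶜ, ((if i ∈ U then (-1 : ℝ) else 1) + if i ∉ P then 1 else 0) =
      if U ⊆ P then 2 ^ #Pᶜ else 0 := by
    rw [prod_congr rfl (g := fun i => if i ∉ U then (2 : ℝ) else 0) fun i hi => by
      by_cases hU : i ∈ U <;> norm_num [mem_compl.mp hi, hU], prod_ite_zero, prod_const]
    simp only [mem_compl, subset_iff]
    exact if_congr (forall_congr' fun i => not_imp_not) rfl rfl
  rw [hP, hPc]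
  split_ifs with h
  · rw [walsh_of_subset h]
  · rw [mul_zero]

/-- `S` is a nonempty face of the join of the boundaries of the simplices on `M` and `Mᶜ`;
for `M = [m]` this is `D̄_{m,n}`. -/
def IsBoundaryJoinFace (M S : Finset α) : Prop := S.Nonempty ∧ ¬M ⊆ S ∧ ¬Mᶜ ⊆ S

instance (M : Finset α) : DecidablePred (IsBoundaryJoinFace M) := fun _ => by
  unfold IsBoundaryJoinFace; infer_instance

lemma sum_walsh_filter_isBoundaryJoinFace {M U : Finset α} (hM : M.Nonempty)
    (hMc : Mᶜ.Nonempty) (hU : U.Nonempty) :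
    ∑ S with IsBoundaryJoinFace M S, walsh U S =
      (-1) ^ #U * (1 - (if U ⊆ M then 2 ^ #Mᶜ else 0) - (if U ⊆ Mᶜ then 2 ^ #M else 0)) - 1 := by
  have hne : (univ : Finset α) ≠ ∅ := (hM.mono (subset_univ M)).ne_empty
  have hcover : ∀ S : Finset α, M ⊆ S → Mᶜ ⊆ S → S = univ := fun S h h' =>
    eq_univ_of_forall fun i => by by_cases hi : i ∈ M; exacts [h hi, h' (mem_compl.mpr hi)]
  -- `∅ ⊆ S` makes the sum over all `S` a superset sum too.
  have inclusion_exclusion : ∀ S : Finset α, (if IsBoundaryJoinFace M S then walsh U S else 0) =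
      (if ∅ ⊆ S then walsh U S else 0) - (if S = ∅ then walsh U S else 0)
        - (if M ⊆ S then walsh U S else 0) - (if Mᶜ ⊆ S then walsh U S else 0)
        + (if S = univ then walsh U S else 0) := by
    intro S
    by_cases hS0 : S = ∅
    · subst hS0
      simp [IsBoundaryJoinFace, hM.ne_empty, hMc.ne_empty, hne.symm]
    by_cases hSu : S = univ
    · subst hSu
      simp [IsBoundaryJoinFace, hne]
    simp only [IsBoundaryJoinFace, nonempty_iff_ne_empty, hS0, hSu, empty_subset, ne_eq,
      not_false_eq_true, true_and, if_true, if_false]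
    by_cases hMS : M ⊆ S <;> by_cases hMcS : Mᶜ ⊆ S
    · exact absurd (hcover S hMS hMcS) hSu
    all_goals simp [hMS, hMcS]
  rw [sum_filter, sum_congr rfl fun S _ => inclusion_exclusion S]
  simp only [sum_add_distrib, sum_sub_distrib, sum_ite_eq', mem_univ, if_true, ← sum_filter,
    sum_walsh_filter_superset, compl_compl, compl_empty]
  have hU0 : ¬U ⊆ ∅ := fun h => hU.ne_empty (subset_empty.mp h)
  rw [if_neg hU0, walsh_of_subset (subset_univ U), show walsh U ∅ = 1 by simp [walsh]]
  split_ifs <;> ring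

section

variable {M A B : Finset α} (hA : A ⊆ M) (hB : B ⊆ Mᶜ)
include hA hB

lemma union_sdiff_of_subset_of_subset_compl : (A ∪ B) \ M = B := by
  rw [union_sdiff_distrib, sdiff_eq_empty_iff_subset.mpr hA, empty_union,
    sdiff_eq_self_of_disjoint (subset_compl_iff_disjoint_right.mp hB)]

lemma union_sdiff_compl_of_subset_of_subset_compl : (A ∪ B) \ Mᶜ = A := by
  rw [union_comm]
  exact union_sdiff_of_subset_of_subset_compl hB (by rwa [compl_compl])

lemma walsh_union_of_subset_of_subset_compl (S : Finset α) :
    walsh (A ∪ B) S = walsh A S * walsh B S := by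
  rw [walsh_mul_walsh, (disjoint_compl_right.mono hA hB).symmDiff_eq_sup, sup_eq_union]

lemma neg_one_pow_card_union_of_subset_of_subset_compl (heven : Even (#A + #B)) :
    ((-1 : ℝ) ^ #(A ∪ B)) = 1 := by
  rw [card_union_of_disjoint (disjoint_compl_right.mono hA hB), heven.neg_one_pow]

lemma sum_walsh_union_filter_isBoundaryJoinFace (hA0 : A.Nonempty) (hB0 : B.Nonempty)
    (heven : Even (#A + #B)) : ∑ S with IsBoundaryJoinFace M S, walsh (A ∪ B) S = 0 := by
  have hAB : ¬A ∪ B ⊆ M := fun h => by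
    simpa [union_sdiff_of_subset_of_subset_compl hA hB, hB0.ne_empty] using
      sdiff_eq_empty_iff_subset.mpr h
  have hAB' : ¬A ∪ B ⊆ Mᶜ := fun h => by
    simpa [union_sdiff_compl_of_subset_of_subset_compl hA hB, hA0.ne_empty] using
      sdiff_eq_empty_iff_subset.mpr h
  rw [sum_walsh_filter_isBoundaryJoinFace (hA0.mono hA) (hB0.mono hB)
    (hA0.mono subset_union_left), if_neg hAB, if_neg hAB',
    neg_one_pow_card_union_of_subset_of_subset_compl hA hB heven]
  ring

lemma sum_walsh_union_symmDiff_filter_isBoundaryJoinFace (hM : M.Nonempty) (hMc : Mᶜ.Nonempty)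
    (heven : Even (#A + #B)) {T : Finset α} (hT : T ≠ A ∪ B) :
    ∑ S with IsBoundaryJoinFace M S, walsh ((A ∪ B) ∆ T) S =
      (-1) ^ #T * (1 - (if B = T \ M then 2 ^ #Mᶜ else 0) - (if A = T ∩ M then 2 ^ #M else 0))
        - 1 := by
  have hsign : ((-1 : ℝ) ^ #((A ∪ B) ∆ T)) = (-1) ^ #T := by
    rw [← walsh_of_subset (subset_univ _), ← walsh_mul_walsh, walsh_of_subset (subset_univ _),
      walsh_of_subset (subset_univ _),
      neg_one_pow_card_union_of_subset_of_subset_compl hA hB heven, one_mul]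
  rw [sum_walsh_filter_isBoundaryJoinFace hM hMc (symmDiff_nonempty.mpr hT.symm), hsign]
  simp only [symmDiff_subset_iff_sdiff_eq_sdiff, union_sdiff_of_subset_of_subset_compl hA hB,
    union_sdiff_compl_of_subset_of_subset_compl hA hB, sdiff_compl, inf_eq_inter]

end

theorem sum_filter_isBoundaryJoinFace_walsh_mul_eq_zero {M A₁ A₂ B₁ B₂ T : Finset α}
    (hA₁ : A₁ ⊆ M) (hA₂ : A₂ ⊆ M) (hB₁ : B₁ ⊆ Mᶜ) (hB₂ : B₂ ⊆ Mᶜ)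
    (hA₁0 : A₁.Nonempty) (hA₂0 : A₂.Nonempty) (hB₁0 : B₁.Nonempty) (hB₂0 : B₂.Nonempty)
    (h₁₁ : Even (#A₁ + #B₁)) (h₁₂ : Even (#A₁ + #B₂)) (h₂₁ : Even (#A₂ + #B₁))
    (h₂₂ : Even (#A₂ + #B₂))
    (hT₁₁ : T ≠ A₁ ∪ B₁) (hT₁₂ : T ≠ A₁ ∪ B₂) (hT₂₁ : T ≠ A₂ ∪ B₁) (hT₂₂ : T ≠ A₂ ∪ B₂) :
    ∑ S with IsBoundaryJoinFace M S,
      (walsh A₁ S - walsh A₂ S) * (walsh B₁ S - walsh B₂ S) * (1 - walsh T S) = 0 := by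
  have hM := hA₁0.mono hA₁
  have hMc := hB₁0.mono hB₁
  have expand : ∀ S,
      (walsh A₁ S - walsh A₂ S) * (walsh B₁ S - walsh B₂ S) * (1 - walsh T S) =
        walsh (A₁ ∪ B₁) S - walsh (A₁ ∪ B₂) S - walsh (A₂ ∪ B₁) S + walsh (A₂ ∪ B₂) S
        - walsh ((A₁ ∪ B₁) ∆ T) S + walsh ((A₁ ∪ B₂) ∆ T) S + walsh ((A₂ ∪ B₁) ∆ T) S
        - walsh ((A₂ ∪ B₂) ∆ T) S := by
    intro S
    simp only [← walsh_mul_walsh, walsh_union_of_subset_of_subset_compl hA₁ hB₁,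
      walsh_union_of_subset_of_subset_compl hA₁ hB₂,
      walsh_union_of_subset_of_subset_compl hA₂ hB₁,
      walsh_union_of_subset_of_subset_compl hA₂ hB₂]
    ring
  simp only [expand, sum_add_distrib, sum_sub_distrib,
    sum_walsh_union_filter_isBoundaryJoinFace hA₁ hB₁ hA₁0 hB₁0 h₁₁,
    sum_walsh_union_filter_isBoundaryJoinFace hA₁ hB₂ hA₁0 hB₂0 h₁₂,
    sum_walsh_union_filter_isBoundaryJoinFace hA₂ hB₁ hA₂0 hB₁0 h₂₁,
    sum_walsh_union_filter_isBoundaryJoinFace hA₂ hB₂ hA₂0 hB₂0 h₂₂,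
    sum_walsh_union_symmDiff_filter_isBoundaryJoinFace hA₁ hB₁ hM hMc h₁₁ hT₁₁,
    sum_walsh_union_symmDiff_filter_isBoundaryJoinFace hA₁ hB₂ hM hMc h₁₂ hT₁₂,
    sum_walsh_union_symmDiff_filter_isBoundaryJoinFace hA₂ hB₁ hM hMc h₂₁ hT₂₁,
    sum_walsh_union_symmDiff_filter_isBoundaryJoinFace hA₂ hB₂ hM hMc h₂₂ hT₂₂]
  ring

end Walsh

lemma dFace_iff {m n : ℕ} (S : Finset (Fin (m + n))) :
    DFace m n S ↔ IsBoundaryJoinFace {i : Fin (m + n) | i.val < m} S := by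
  simp [DFace, IsBoundaryJoinFace, subset_iff, not_lt]

lemma dvecD_eq_walsh (m n : ℕ) (T : Finset (Fin (m + n))) (S : DIdx m n) :
    dvecD m n T S = (1 - walsh T S.val) / 2 := by
  unfold dvecD walsh
  rcases Nat.even_or_odd #(S.val ∩ T) with h | h
  · rw [if_neg (Nat.not_odd_iff_even.mpr h), h.neg_one_pow]; norm_num
  · rw [if_pos h, h.neg_one_pow]; norm_num

lemma fourParity_eq_walsh (m n : ℕ) (A₁ A₂ B₁ B₂ S : Finset (Fin (m + n))) :
    fourParity m n A₁ A₂ B₁ B₂ S =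
      -((walsh A₁ S - walsh A₂ S) * (walsh B₁ S - walsh B₂ S)) / 4 := by
  unfold fourParity walsh
  simp only [Nat.odd_iff, Nat.even_iff, neg_one_pow_eq_pow_mod_two (R := ℝ) #(S ∩ _)]
  rcases Nat.mod_two_eq_zero_or_one #(S ∩ A₁) with h₁ | h₁ <;>
  rcases Nat.mod_two_eq_zero_or_one #(S ∩ A₂) with h₂ | h₂ <;>
  rcases Nat.mod_two_eq_zero_or_one #(S ∩ B₁) with h₃ | h₃ <;>
  rcases Nat.mod_two_eq_zero_or_one #(S ∩ B₂) with h₄ | h₄ <;>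
  simp only [h₁, h₂, h₃, h₄] <;> norm_num

lemma fourParity_eq_one_or_eq_neg_one_or_eq_zero (m n : ℕ)
    (A₁ A₂ B₁ B₂ S : Finset (Fin (m + n))) :
    fourParity m n A₁ A₂ B₁ B₂ S = 1 ∨ fourParity m n A₁ A₂ B₁ B₂ S = -1 ∨
      fourParity m n A₁ A₂ B₁ B₂ S = 0 := by
  unfold fourParity; split_ifs <;> simp

lemma sum_mul_boole_eq_card_sub_card {ι : Type*} [Fintype ι] (g : ι → ℝ)
    (hg : ∀ i, g i = 1 ∨ g i = -1 ∨ g i = 0) (p : ι → Prop) [DecidablePred p] :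
    ∑ i, g i * (if p i then 1 else 0) = #{i | p i ∧ g i = 1} - #{i | p i ∧ g i = -1} := by
  simp only [card_filter, Nat.cast_sum, Nat.cast_ite, Nat.cast_one, Nat.cast_zero,
    ← sum_sub_distrib]
  refine sum_congr rfl fun i _ => ?_
  rcases hg i with h | h | h <;> by_cases hp : p i <;> norm_num [h, hp]

theorem stmt_15_general (m n : ℕ)
    (A₁ A₂ B₁ B₂ : Finset (Fin (m + n)))
    (hA₁ : ∀ i ∈ A₁, i.val < m) (hA₂ : ∀ i ∈ A₂, i.val < m)
    (hB₁ : ∀ j ∈ B₁, m ≤ j.val) (hB₂ : ∀ j ∈ B₂, m ≤ j.val)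
    (hA₁ne : A₁.Nonempty) (hA₂ne : A₂.Nonempty)
    (hB₁ne : B₁.Nonempty) (hB₂ne : B₂.Nonempty)
    (hpar₁ : A₁.card % 2 = A₂.card % 2)
    (hpar₂ : A₂.card % 2 = B₁.card % 2)
    (hpar₃ : B₁.card % 2 = B₂.card % 2)
    (T : Finset (Fin (m + n)))
    (hT : T ≠ A₁ ∪ B₁ ∧ T ≠ A₁ ∪ B₂ ∧ T ≠ A₂ ∪ B₁ ∧ T ≠ A₂ ∪ B₂) :
    (∑ S : DIdx m n, fourParity m n A₁ A₂ B₁ B₂ S.val * dvecD m n T S = 0) ∧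
    (Finset.univ.filter (fun S : DIdx m n =>
        Odd ((S.val ∩ T).card) ∧ fourParity m n A₁ A₂ B₁ B₂ S.val = 1)).card =
      (Finset.univ.filter (fun S : DIdx m n =>
        Odd ((S.val ∩ T).card) ∧ fourParity m n A₁ A₂ B₁ B₂ S.val = -1)).card := by
  set M : Finset (Fin (m + n)) := {i | i.val < m}
  have subset_M : ∀ {A : Finset (Fin (m + n))}, (∀ i ∈ A, i.val < m) → A ⊆ M :=
    fun h i hi => by simpa [M] using h i hi
  have subset_Mc : ∀ {B : Finset (Fin (m + n))}, (∀ j ∈ B, m ≤ j.val) → B ⊆ Mᶜ :=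
    fun h j hj => by simpa [M] using h j hj
  have heven : ∀ a b : ℕ, a % 2 = b % 2 → Even (a + b) := fun a b h =>
    Nat.even_iff.mpr (by omega)
  obtain ⟨hT₁₁, hT₁₂, hT₂₁, hT₂₂⟩ := hT
  have hsum : ∑ S : DIdx m n, fourParity m n A₁ A₂ B₁ B₂ S.val * dvecD m n T S = 0 := by
    have hfaces : ∀ S, S ∈ ({S | IsBoundaryJoinFace M S} : Finset _) ↔ DFace m n S := fun S => by
      rw [mem_filter_univ, dFace_iff]
    simp only [fourParity_eq_walsh, dvecD_eq_walsh]
    rw [← sum_subtype _ hfaces fun S =>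
      -((walsh A₁ S - walsh A₂ S) * (walsh B₁ S - walsh B₂ S)) / 4 * ((1 - walsh T S) / 2)]
    simp only [div_mul_div_comm, neg_mul, ← sum_div, sum_neg_distrib,
      sum_filter_isBoundaryJoinFace_walsh_mul_eq_zero (subset_M hA₁) (subset_M hA₂)
        (subset_Mc hB₁) (subset_Mc hB₂) hA₁ne hA₂ne hB₁ne hB₂ne
        (heven _ _ (by omega)) (heven _ _ (by omega)) (heven _ _ (by omega))
        (heven _ _ (by omega)) hT₁₁ hT₁₂ hT₂₁ hT₂₂]
    norm_num
  refine ⟨hsum, ?_⟩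
  have hcount := sum_mul_boole_eq_card_sub_card _
    (fun S : DIdx m n => fourParity_eq_one_or_eq_neg_one_or_eq_zero m n A₁ A₂ B₁ B₂ S.val)
    (fun S => Odd (#(S.val ∩ T)))
  exact_mod_cast sub_eq_zero.mp (hcount.symm.trans hsum)

/-- for `T ∉ {A₁ ∪ B₁, A₁ ∪ B₂, A₂ ∪ B₁, A₂ ∪ B₂}`,
`Σ_{S ∈ D̄_{m,n}} a_S d^T_S = 0`; equivalently, among the `S ∈ D̄_{m,n}` with
`#(S ∩ T)` odd, as many have `a_S = 1` as have `a_S = −1`. -/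
theorem stmt_15 (m n : ℕ) (hm : 2 ≤ m) (hn : 2 ≤ n)
    (A₁ A₂ B₁ B₂ : Finset (Fin (m + n)))
    (hA₁ : ∀ i ∈ A₁, i.val < m) (hA₂ : ∀ i ∈ A₂, i.val < m)
    (hB₁ : ∀ j ∈ B₁, m ≤ j.val) (hB₂ : ∀ j ∈ B₂, m ≤ j.val)
    (hA₁ne : A₁.Nonempty) (hA₂ne : A₂.Nonempty)
    (hB₁ne : B₁.Nonempty) (hB₂ne : B₂.Nonempty)
    (hAne : A₁ ≠ A₂) (hBne : B₁ ≠ B₂)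
    (hpar₁ : A₁.card % 2 = A₂.card % 2)
    (hpar₂ : A₂.card % 2 = B₁.card % 2)
    (hpar₃ : B₁.card % 2 = B₂.card % 2)
    (T : Finset (Fin (m + n)))
    (hT : T ≠ A₁ ∪ B₁ ∧ T ≠ A₁ ∪ B₂ ∧ T ≠ A₂ ∪ B₁ ∧ T ≠ A₂ ∪ B₂) :
    (∑ S : DIdx m n, fourParity m n A₁ A₂ B₁ B₂ S.val * dvecD m n T S = 0) ∧
    (Finset.univ.filter (fun S : DIdx m n =>
        Odd ((S.val ∩ T).card) ∧ fourParity m n A₁ A₂ B₁ B₂ S.val = 1)).card =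
      (Finset.univ.filter (fun S : DIdx m n =>
        Odd ((S.val ∩ T).card) ∧ fourParity m n A₁ A₂ B₁ B₂ S.val = -1)).card :=
  stmt_15_general m n A₁ A₂ B₁ B₂ hA₁ hA₂ hB₁ hB₂ hA₁ne hA₂ne hB₁ne hB₂ne hpar₁ hpar₂ hpar₃ T hT
end
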